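/- A generalized topological space (X, μ) is sλ-symmetric (x ∈ scl_λ({y}) implies y ∈ scl_λ({x})) if and only if every singleton {x} is sg_λ-closed; moreover, (X, μ) is sλT₁ if and only if it is sλ-symmetric and sλT₀. -/
import Mathlib


open Set

variable {X : Type*}

def IsGT (μ : Set (Set X)) : Prop :=
  ∅ ∈ μ ∧ ∀ S : Set (Set X), S ⊆ μ → ⋃₀ S ∈ μ

def muInt (μ : Set (Set X)) (A : Set X) : Set X := ⋃₀ {U | U ∈ μ ∧ U ⊆ A}

def muCl (μ : Set (Set X)) (A : Set X) : Set X := ⋂₀ {F | Fᶜ ∈ μ ∧ A ⊆ F}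

def sOpen (μ : Set (Set X)) (A : Set X) : Prop := A ⊆ muCl μ (muInt μ A)

def sClosed (μ : Set (Set X)) (A : Set X) : Prop := sOpen μ Aᶜ

def sInt (μ : Set (Set X)) (A : Set X) : Set X := ⋃₀ {U | sOpen μ U ∧ U ⊆ A}

def sCl (μ : Set (Set X)) (A : Set X) : Set X := ⋂₀ {F | sClosed μ F ∧ A ⊆ F}

def sWedge (μ : Set (Set X)) (A : Set X) : Set X := ⋂₀ {U | sOpen μ U ∧ A ⊆ U}

def sVee (μ : Set (Set X)) (A : Set X) : Set X := ⋃₀ {F | sClosed μ F ∧ F ⊆ A}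

def sLambdaClosed (μ : Set (Set X)) (A : Set X) : Prop :=
  ∃ K P : Set X, K = sWedge μ K ∧ sClosed μ P ∧ A = K ∩ P

def sLambdaOpen (μ : Set (Set X)) (A : Set X) : Prop := sLambdaClosed μ Aᶜ

def sclL (μ : Set (Set X)) (A : Set X) : Set X := ⋂₀ {F | sLambdaClosed μ F ∧ A ⊆ F}

def sIntL (μ : Set (Set X)) (A : Set X) : Set X := ⋃₀ {U | sLambdaOpen μ U ∧ U ⊆ A}

def sWedgeL (μ : Set (Set X)) (A : Set X) : Set X := ⋂₀ {U | sLambdaOpen μ U ∧ A ⊆ U}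

def sVeeL (μ : Set (Set X)) (A : Set X) : Set X := ⋃₀ {F | sLambdaClosed μ F ∧ F ⊆ A}

def sgClosed (μ : Set (Set X)) (A : Set X) : Prop :=
  ∀ U : Set X, sLambdaOpen μ U → A ⊆ U → sclL μ A ⊆ U

def sgOpen (μ : Set (Set X)) (A : Set X) : Prop := sgClosed μ Aᶜ

def sBetaClosed (μ : Set (Set X)) (A : Set X) : Prop :=
  ∃ H Q : Set X, H = sWedgeL μ H ∧ sLambdaClosed μ Q ∧ A = H ∩ Q

def sT0 (μ : Set (Set X)) : Prop :=
  ∀ x y : X, x ≠ y → ∃ U : Set X, sLambdaOpen μ U ∧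
    ((x ∈ U ∧ y ∉ U) ∨ (y ∈ U ∧ x ∉ U))

def sT1 (μ : Set (Set X)) : Prop :=
  ∀ x y : X, x ≠ y → ∃ U V : Set X, sLambdaOpen μ U ∧ sLambdaOpen μ V ∧
    x ∈ U ∧ y ∉ U ∧ y ∈ V ∧ x ∉ V


lemma muCl_mono' (μ : Set (Set X)) {A B : Set X} (h : A ⊆ B) : muCl μ A ⊆ muCl μ B := by
  intro x hx F hF
  exact hx F ⟨hF.1, h.trans hF.2⟩

lemma muInt_mono' (μ : Set (Set X)) {A B : Set X} (h : A ⊆ B) : muInt μ A ⊆ muInt μ B := by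
  rintro x ⟨U, ⟨hU, hUA⟩, hxU⟩
  exact ⟨U, ⟨hU, hUA.trans h⟩, hxU⟩

lemma sOpen_sUnion' (μ : Set (Set X)) {S : Set (Set X)} (h : ∀ U ∈ S, sOpen μ U) :
    sOpen μ (⋃₀ S) := by
  rintro x ⟨U, hUS, hxU⟩
  exact muCl_mono' μ (muInt_mono' μ (subset_sUnion_of_mem hUS)) (h U hUS hxU)

lemma sClosed_sInter' (μ : Set (Set X)) {S : Set (Set X)} (h : ∀ F ∈ S, sClosed μ F) :
    sClosed μ (⋂₀ S) := by
  show sOpen μ (⋂₀ S)ᶜ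
  rw [Set.compl_sInter]
  apply sOpen_sUnion'
  rintro U ⟨F, hF, rfl⟩
  exact h F hF

lemma subset_sWedge' (μ : Set (Set X)) (A : Set X) : A ⊆ sWedge μ A := by
  intro x hx U hU
  exact hU.2 hx

lemma sClosed_univ' (μ : Set (Set X)) : sClosed μ (univ : Set X) := by
  show sOpen μ (univ : Set X)ᶜ
  rw [Set.compl_univ]
  exact empty_subset _

lemma univ_eq_sWedge' (μ : Set (Set X)) : (univ : Set X) = sWedge μ univ :=
  ((subset_univ _).antisymm (subset_sWedge' μ univ)).symm

lemma subset_sclL' (μ : Set (Set X)) (A : Set X) : A ⊆ sclL μ A := by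
  intro x hx F hF
  exact hF.2 hx

lemma sclL_subset' (μ : Set (Set X)) {A F : Set X} (hF : sLambdaClosed μ F) (hAF : A ⊆ F) :
    sclL μ A ⊆ F :=
  sInter_subset_of_mem ⟨hF, hAF⟩

lemma sLambdaClosed_sclL' (μ : Set (Set X)) (A : Set X) : sLambdaClosed μ (sclL μ A) := by
  refine ⟨⋂₀ {K | K = sWedge μ K ∧ A ⊆ K}, ⋂₀ {P | sClosed μ P ∧ A ⊆ P}, ?_, ?_, ?_⟩
  · refine (subset_sWedge' μ _).antisymm ?_
    rintro z hz K' ⟨hK', hAK'⟩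
    rw [hK']
    rintro U ⟨hU, hKU⟩
    have hm : K' ∈ {K | K = sWedge μ K ∧ A ⊆ K} := ⟨hK', hAK'⟩
    exact hz U ⟨hU, (sInter_subset_of_mem hm).trans hKU⟩
  · exact sClosed_sInter' μ (fun F hF => hF.1)
  · apply Set.Subset.antisymm
    · intro x hx
      constructor
      · rintro K' ⟨hK', hAK'⟩
        exact hx K' ⟨⟨K', univ, hK', sClosed_univ' μ, (inter_univ K').symm⟩, hAK'⟩
      · rintro P' ⟨hP', hAP'⟩
        exact hx P' ⟨⟨univ, P', univ_eq_sWedge' μ, hP', (univ_inter P').symm⟩, hAP'⟩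
    · rintro x ⟨hxK, hxP⟩ F ⟨⟨K', P', hK', hP', rfl⟩, hAF⟩
      exact ⟨hxK K' ⟨hK', hAF.trans inter_subset_left⟩,
        hxP P' ⟨hP', hAF.trans inter_subset_right⟩⟩

lemma sLambdaOpen_compl_sclL' (μ : Set (Set X)) (A : Set X) : sLambdaOpen μ (sclL μ A)ᶜ := by
  show sLambdaClosed μ (sclL μ A)ᶜᶜ
  rw [compl_compl]
  exact sLambdaClosed_sclL' μ A

theorem stmt19 (μ : Set (Set X)) (hμ : IsGT μ) :
    ((∀ x y : X, x ∈ sclL μ ({y} : Set X) → y ∈ sclL μ ({x} : Set X)) ↔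
      (∀ x : X, sgClosed μ ({x} : Set X))) ∧
    (sT1 μ ↔ (∀ x y : X, x ∈ sclL μ ({y} : Set X) → y ∈ sclL μ ({x} : Set X)) ∧ sT0 μ) := by 
  have symm_iff : (∀ x y : X, x ∈ sclL μ ({y} : Set X) → y ∈ sclL μ ({x} : Set X)) ↔
      (∀ x : X, sgClosed μ ({x} : Set X)) := by
    constructor
    · intro hsym x U hU hxU z hz
      by_contra hzU
      have hx : x ∈ sclL μ ({z} : Set X) := hsym z x hz
      have hsub : sclL μ ({z} : Set X) ⊆ Uᶜ :=
        sclL_subset' μ hU (singleton_subset_iff.mpr hzU)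
      exact (hsub hx) (hxU rfl)
    · intro hsg x y hxy
      by_contra hy
      have hU : sLambdaOpen μ (sclL μ ({x} : Set X))ᶜ := sLambdaOpen_compl_sclL' μ {x}
      have := hsg y _ hU (singleton_subset_iff.mpr hy) hxy
      exact this (subset_sclL' μ {x} rfl)
  refine ⟨symm_iff, ?_⟩
  constructor
  · intro h1
    have hsingle : ∀ x : X, sclL μ ({x} : Set X) = {x} := by
      intro x
      refine Set.Subset.antisymm ?_ (subset_sclL' μ {x})
      intro z hz
      by_contra hzx
      have hne : z ≠ x := fun h => hzx (h ▸ rfl)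
      obtain ⟨U, V, hU, hV, hzU, hxU, hxV, hzV⟩ := h1 z x hne
      have hsub : sclL μ ({x} : Set X) ⊆ Uᶜ :=
        sclL_subset' μ hU (singleton_subset_iff.mpr hxU)
      exact hsub hz hzU
    refine ⟨?_, ?_⟩
    · intro x y hx
      rw [hsingle y] at hx
      rw [hx]
      exact subset_sclL' μ {y} rfl
    · intro x y hxy
      obtain ⟨U, V, hU, hV, hxU, hyU, hyV, hxV⟩ := h1 x y hxy
      exact ⟨U, hU, Or.inl ⟨hxU, hyU⟩⟩
  · rintro ⟨hsym, h0⟩ x y hxy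
    have key : ∀ a b : X, a ∉ sclL μ ({b} : Set X) →
        ∃ U V : Set X, sLambdaOpen μ U ∧ sLambdaOpen μ V ∧
          a ∈ U ∧ b ∉ U ∧ b ∈ V ∧ a ∉ V := by
      intro a b hab
      have hba : b ∉ sclL μ ({a} : Set X) := fun h => hab (hsym b a h)
      exact ⟨(sclL μ ({b} : Set X))ᶜ, (sclL μ ({a} : Set X))ᶜ,
        sLambdaOpen_compl_sclL' μ {b}, sLambdaOpen_compl_sclL' μ {a},
        hab, fun h => h (subset_sclL' μ {b} rfl),
        hba, fun h => h (subset_sclL' μ {a} rfl)⟩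
    obtain ⟨U, hU, hcase⟩ := h0 x y hxy
    rcases hcase with ⟨hxU, hyU⟩ | ⟨hyU, hxU⟩
    · apply key
      intro hx
      exact (sclL_subset' μ hU (singleton_subset_iff.mpr hyU) hx) hxU
    · apply key
      intro hx
      have hy : y ∈ sclL μ ({x} : Set X) := hsym x y hx
      exact (sclL_subset' μ hU (singleton_subset_iff.mpr hxU) hy) hyU
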